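/- arXiv:2402.09537 — 3 statements merged into one kernel-verified Lean document; each statement's English description precedes it below -/
import Mathlib

section
/- For every natural number n, the map T(x, y₁, …, y₆) = (4x, 2y₁, …, 2y₆) restricts to a bijection between the set of integer solutions of x² + y₁⁴ + ⋯ + y₆⁴ = n and the set of integer solutions of X² + Y₁⁴ + ⋯ + Y₆⁴ = 16n. -/
private lemma fourth_pow_zmod16 (y : ℤ) :
    ((y : ZMod 16))^4 = if Even y then 0 else 1 := by
  rcases Int.even_or_odd y with ⟨k, rfl⟩ | ⟨k, rfl⟩
  · rw [if_pos ⟨k, rfl⟩]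
    push_cast
    have h : ((k:ZMod 16) + k)^4 = 16 * (k^4) := by ring
    rw [h, show (16 : ZMod 16) = 0 from by decide, zero_mul]
  · rw [if_neg (by simp [Int.even_add_one, Int.even_mul])]
    obtain ⟨m, hm⟩ := Int.even_mul_succ_self k
    have h16 : ((2*k+1)^4 : ℤ) = 16 * (m*(2*k^2+2*k+1)) + 1 := by
      linear_combination (8*(2*k^2+2*k+1)) * hm
    have h2 : (((2*k+1)^4 : ℤ) : ZMod 16) = ((16 * (m*(2*k^2+2*k+1)) + 1 : ℤ) : ZMod 16) := by
      rw [h16]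
    push_cast at h2
    simpa [show (16 : ZMod 16) = 0 from by decide] using h2

private lemma key16 : ∀ a : ZMod 16, ∀ k : Fin 7, a^2 + ((k:ℕ) : ZMod 16) = 0 → k = 0 ∧ a^2 = 0 := by
  decide

theorem square_plus_six_fourth_powers_bijection (n : ℕ) :
    Set.BijOn (fun p : ℤ × (Fin 6 → ℤ) => (4 * p.1, fun i => 2 * p.2 i))
      {p : ℤ × (Fin 6 → ℤ) | p.1 ^ 2 + ∑ i, (p.2 i) ^ 4 = (n : ℤ)}
      {p : ℤ × (Fin 6 → ℤ) | p.1 ^ 2 + ∑ i, (p.2 i) ^ 4 = 16 * (n : ℤ)} := by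
  classical
  refine ⟨?_, ?_, ?_⟩
  · rintro ⟨x, y⟩ hx
    simp only [Set.mem_setOf_eq] at hx ⊢
    simp only [mul_pow]
    rw [← Finset.mul_sum]
    norm_num
    linear_combination (16 : ℤ) * hx
  · rintro ⟨x, y⟩ _ ⟨x', y'⟩ _ h
    simp only [Prod.mk.injEq] at h
    obtain ⟨h1, h2⟩ := h
    have hx : x = x' := by linarith
    have hy : y = y' := by
      funext i
      have := congrFun h2 i
      simpa using this
    simp [hx, hy]
  · rintro ⟨X, Y⟩ hX
    simp only [Set.mem_setOf_eq] at hX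
    have hz : ((X : ZMod 16))^2 + ∑ i, ((Y i : ZMod 16))^4 = 0 := by
      have := congrArg (fun z : ℤ => (z : ZMod 16)) hX
      push_cast at this
      rw [this, show (16 : ZMod 16) = 0 from by decide, zero_mul]
    set k : ℕ := (Finset.univ.filter fun i => ¬ Even (Y i)).card with hk
    have hkle : k ≤ 6 :=
      le_trans (Finset.card_filter_le _ _) (by simp)
    have hsum : ∑ i, ((Y i : ZMod 16))^4 = (k : ZMod 16) := by
      rw [hk, ← Finset.sum_boole]
      apply Finset.sum_congr rfl
      intro i _
      rw [fourth_pow_zmod16]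
      by_cases h : Even (Y i) <;> simp [h]
    rw [hsum] at hz
    obtain ⟨hk0, ha0⟩ := key16 (X : ZMod 16) ⟨k, by omega⟩ hz
    have hk0' : k = 0 := by simpa using congrArg Fin.val hk0
    have heven : ∀ i, Even (Y i) := by
      intro i
      by_contra h
      have hmem : i ∈ Finset.univ.filter fun i => ¬ Even (Y i) :=
        Finset.mem_filter.mpr ⟨Finset.mem_univ i, h⟩
      have := Finset.card_pos.mpr ⟨i, hmem⟩
      omega
    have hdvd : (4 : ℤ) ∣ X := by
      have h16 : (16 : ℤ) ∣ X^2 := by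
        have : ((X^2 : ℤ) : ZMod 16) = 0 := by push_cast; exact ha0
        exact (ZMod.intCast_zmod_eq_zero_iff_dvd _ 16).mp this
      have h4 : (4:ℤ)^2 ∣ X^2 := by norm_num; exact h16
      exact (Int.pow_dvd_pow_iff (by norm_num)).mp h4
    obtain ⟨x, rfl⟩ := hdvd
    choose y hy using fun i => (heven i)
    have hYe : ∀ i, Y i = 2 * y i := fun i => by rw [hy i]; ring
    have hsum2 : ∑ i, (Y i)^4 = 16 * ∑ i, (y i)^4 := by
      rw [Finset.mul_sum]
      apply Finset.sum_congr rfl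
      intro i _
      rw [hYe i]; ring
    rw [hsum2] at hX
    refine ⟨⟨x, fun i => y i⟩, ?_, ?_⟩
    · simp only [Set.mem_setOf_eq]
      nlinarith [hX]
    · simp only [Prod.mk.injEq]
      exact ⟨by trivial, funext fun i => by rw [hYe i]⟩
end

section
/- Let r(n) denote the number of solutions of x² + y₁⁴ + ⋯ + y₆⁴ = n in nonnegative integers. Then for all natural numbers l and n, r(16^l · n) = r(n). -/
/-- `r n` counts ordered tuples `(x, y₁, …, y₆)` of nonnegative integers with
`x² + y₁⁴ + ⋯ + y₆⁴ = n`. -/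
noncomputable def r (n : ℕ) : ℕ :=
  Set.ncard {p : ℕ × (Fin 6 → ℕ) | p.1 ^ 2 + ∑ i, (p.2 i) ^ 4 = n}

lemma pow4_mod16 (y : ℕ) : y ^ 4 % 16 = y % 2 := by
  rcases Nat.even_or_odd y with ⟨k, rfl⟩ | ⟨k, rfl⟩
  · have h : (k + k) ^ 4 = 16 * k ^ 4 := by ring
    omega
  · obtain ⟨m, hm⟩ := Nat.even_mul_succ_self k
    have h : (2 * k + 1) ^ 4 = 16 * (k ^ 4 + 2 * k ^ 3 + k ^ 2) + 8 * (k * (k + 1)) + 1 := by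
      ring
    omega

lemma sq_mod16 (x : ℕ) : x ^ 2 % 16 = 0 ∨ x ^ 2 % 16 = 1 ∨ x ^ 2 % 16 = 4 ∨ x ^ 2 % 16 = 9 := by
  rw [Nat.pow_mod]
  have h : x % 16 < 16 := Nat.mod_lt _ (by norm_num)
  interval_cases h : x % 16 <;> decide

lemma four_dvd_of_sq (x : ℕ) (h : x ^ 2 % 16 = 0) : x % 4 = 0 := by
  obtain ⟨q, r, hr, rfl⟩ : ∃ q r, r < 4 ∧ x = 4 * q + r :=
    ⟨x / 4, x % 4, Nat.mod_lt _ (by norm_num), by omega⟩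
  have hx : (4 * q + r) ^ 2 = 16 * q ^ 2 + 8 * q * r + r ^ 2 := by ring
  interval_cases r <;> omega

lemma key (n : ℕ) : r (16 * n) = r n := by
  unfold r
  have himg : {p : ℕ × (Fin 6 → ℕ) | p.1 ^ 2 + ∑ i, (p.2 i) ^ 4 = 16 * n} =
      (fun p : ℕ × (Fin 6 → ℕ) => (4 * p.1, fun i => 2 * p.2 i)) ''
        {p : ℕ × (Fin 6 → ℕ) | p.1 ^ 2 + ∑ i, (p.2 i) ^ 4 = n} := by
    ext ⟨x, y⟩
    simp only [Set.mem_setOf_eq, Set.mem_image, Prod.mk.injEq, Prod.exists]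
    constructor
    · intro h
      have h16 : (x ^ 2 + (y 0 ^ 4 + y 1 ^ 4 + y 2 ^ 4 + y 3 ^ 4 + y 4 ^ 4 + y 5 ^ 4)) % 16 = 0 := by
        rw [Fin.sum_univ_six] at h; omega
      have h0 := pow4_mod16 (y 0)
      have h1 := pow4_mod16 (y 1)
      have h2 := pow4_mod16 (y 2)
      have h3 := pow4_mod16 (y 3)
      have h4 := pow4_mod16 (y 4)
      have h5 := pow4_mod16 (y 5)
      have hs := sq_mod16 x
      have hy0 : y 0 % 2 = 0 := by omega
      have hy1 : y 1 % 2 = 0 := by omega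
      have hy2 : y 2 % 2 = 0 := by omega
      have hy3 : y 3 % 2 = 0 := by omega
      have hy4 : y 4 % 2 = 0 := by omega
      have hy5 : y 5 % 2 = 0 := by omega
      have hx2 : x ^ 2 % 16 = 0 := by omega
      have hx4 : x % 4 = 0 := four_dvd_of_sq x hx2
      obtain ⟨a, rfl⟩ : ∃ a, x = 4 * a := ⟨x / 4, by omega⟩
      obtain ⟨b, rfl⟩ : ∃ b : Fin 6 → ℕ, y = fun i => 2 * b i := by
        refine ⟨fun i => y i / 2, funext fun i => ?_⟩
        fin_cases i <;> simp <;> omega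
      refine ⟨a, b, ?_, rfl, rfl⟩
      have h' : (4 * a) ^ 2 + ((2 * b 0) ^ 4 + (2 * b 1) ^ 4 + (2 * b 2) ^ 4
          + (2 * b 3) ^ 4 + (2 * b 4) ^ 4 + (2 * b 5) ^ 4) = 16 * n := by
        rw [Fin.sum_univ_six] at h; exact h
      have hexp : (4 * a) ^ 2 + ((2 * b 0) ^ 4 + (2 * b 1) ^ 4 + (2 * b 2) ^ 4
          + (2 * b 3) ^ 4 + (2 * b 4) ^ 4 + (2 * b 5) ^ 4) =
          16 * (a ^ 2 + (b 0 ^ 4 + b 1 ^ 4 + b 2 ^ 4 + b 3 ^ 4 + b 4 ^ 4 + b 5 ^ 4)) := by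
        ring
      rw [Fin.sum_univ_six]
      omega
    · rintro ⟨a, b, hab, rfl, rfl⟩
      have hexp : (4 * a) ^ 2 + ∑ i : Fin 6, (2 * b i) ^ 4 =
          16 * (a ^ 2 + ∑ i : Fin 6, (b i) ^ 4) := by
        rw [Fin.sum_univ_six, Fin.sum_univ_six]; ring
      rw [hexp, hab]
  rw [himg]
  apply Set.ncard_image_of_injective
  rintro ⟨a, b⟩ ⟨c, d⟩ h
  simp only [Prod.mk.injEq] at h
  obtain ⟨h1, h2⟩ := h
  have hb : b = d := funext fun i => by
    have hh : 2 * b i = 2 * d i := congrFun h2 i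
    omega
  simp [hb]
  omega

theorem r_sixteen_pow_mul (l n : ℕ) : r (16 ^ l * n) = r n := by
  induction l generalizing n with
  | zero => simp
  | succ l ih =>
    rw [pow_succ, mul_assoc, ih (16 * n), key]
end

section
/- If p is a prime with p ≡ 1 (mod 3), then there exist integers u and v with p = u² + uv + v². -/
private lemma aux_pos (u v : ℤ) (h : u ≠ 0 ∨ v ≠ 0) : 0 < u ^ 2 + u * v + v ^ 2 := by
  rcases h with h' | h'
  · have h5 : 1 ≤ u ^ 2 := by nlinarith [Int.one_le_abs h', sq_abs u]
    nlinarith [sq_nonneg (u + 2 * v)]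
  · have h5 : 1 ≤ v ^ 2 := by nlinarith [Int.one_le_abs h', sq_abs v]
    nlinarith [sq_nonneg (2 * u + v)]

private lemma aux_k (N q k : ℤ) (hk : N = q * k) (h0 : 0 < N) (h1 : N < 3 * q)
    (hq : 0 < q) : k = 1 ∨ k = 2 := by
  have hk0 : 0 < k := by by_contra hc; push_neg at hc; nlinarith
  have hk3 : k < 3 := by by_contra hc; push_neg at hc; nlinarith
  omega

private lemma aux_parity (u v q : ℤ) (hq : q % 2 = 1)
    (hN : u ^ 2 + u * v + v ^ 2 = q * 2) : False := by
  rcases Int.even_or_odd u with ⟨a, ha⟩ | ⟨a, ha⟩ <;>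
    rcases Int.even_or_odd v with ⟨b, hb⟩ | ⟨b, hb⟩
  · obtain ⟨c, hc⟩ : ∃ c : ℤ, u ^ 2 + u * v + v ^ 2 = 4 * c :=
      ⟨a ^ 2 + a * b + b ^ 2, by rw [ha, hb]; ring⟩
    omega
  · obtain ⟨c, hc⟩ : ∃ c : ℤ, u ^ 2 + u * v + v ^ 2 = 2 * c + 1 :=
      ⟨2 * a ^ 2 + 2 * a * b + a + 2 * b ^ 2 + 2 * b, by rw [ha, hb]; ring⟩
    omega
  · obtain ⟨c, hc⟩ : ∃ c : ℤ, u ^ 2 + u * v + v ^ 2 = 2 * c + 1 :=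
      ⟨2 * a ^ 2 + 2 * a * b + b + 2 * b ^ 2 + 2 * a, by rw [ha, hb]; ring⟩
    omega
  · obtain ⟨c, hc⟩ : ∃ c : ℤ, u ^ 2 + u * v + v ^ 2 = 2 * c + 1 :=
      ⟨2 * a ^ 2 + 2 * a * b + 2 * b ^ 2 + 3 * a + 3 * b + 1, by rw [ha, hb]; ring⟩
    omega

theorem prime_one_mod_three_rep (p : ℕ) (hp : p.Prime) (h : p % 3 = 1) :
    ∃ u v : ℤ, (p : ℤ) = u ^ 2 + u * v + v ^ 2 := by
  haveI : Fact p.Prime := ⟨hp⟩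
  have hp2 : 2 ≤ p := hp.two_le
  -- p is odd
  have hpodd : p % 2 = 1 := by
    rcases hp.eq_two_or_odd with h2 | h2
    · omega
    · exact h2
  -- get an element x of (ZMod p) with x^2 + x + 1 = 0
  obtain ⟨m, hm⟩ : ∃ m, p - 1 = 3 * m := ⟨(p - 1) / 3, by omega⟩
  have hm1 : 1 ≤ m := by omega
  have hcardu : Nat.card (ZMod p)ˣ = p - 1 := by
    rw [Nat.card_eq_fintype_card, ZMod.card_units_eq_totient, Nat.totient_prime hp]
  obtain ⟨g, hg⟩ := IsCyclic.exists_ofOrder_eq_natCard (α := (ZMod p)ˣ)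
  rw [hcardu] at hg
  set ω : (ZMod p)ˣ := g ^ m with hω
  have hω3 : ω ^ 3 = 1 := by
    rw [hω, ← pow_mul, mul_comm, ← hm, ← hg, pow_orderOf_eq_one]
  have hωne : ω ≠ 1 := by
    intro hωeq
    have hdvd : orderOf g ∣ m := orderOf_dvd_of_pow_eq_one hωeq
    rw [hg] at hdvd
    have := Nat.le_of_dvd (by omega) hdvd
    omega
  set x : ZMod p := (ω : ZMod p) with hxdef
  have hx3 : x ^ 3 = 1 := by
    have : ((ω ^ 3 : (ZMod p)ˣ) : ZMod p) = ((1 : (ZMod p)ˣ) : ZMod p) := by rw [hω3]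
    simpa using this
  have hxne : x ≠ 1 := fun hh => hωne (Units.ext hh)
  have hx2 : x ^ 2 + x + 1 = 0 := by
    have hfac : (x - 1) * (x ^ 2 + x + 1) = 0 := by linear_combination hx3
    rcases mul_eq_zero.mp hfac with h1 | h2
    · exact absurd (sub_eq_zero.mp h1) hxne
    · exact h2
  -- pigeonhole
  set n : ℕ := Nat.sqrt p with hn
  have hsq : n ^ 2 < p := by
    rcases lt_or_eq_of_le (Nat.sqrt_le' p) with h' | h'
    · exact h'
    · exfalso
      have hdvd : n ∣ p := ⟨n, by rw [← h']; ring⟩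
      rw [← hn] at h'
      rcases hp.eq_one_or_self_of_dvd n hdvd with h1 | h1
      · rw [h1] at h'; simp at h'; omega
      · rw [h1] at h'; nlinarith [hp2]
  have hlt : p < (n + 1) ^ 2 := Nat.lt_succ_sqrt' p
  classical
  have hcard : (Finset.univ : Finset (ZMod p)).card
      < ((Finset.range (n + 1)) ×ˢ (Finset.range (n + 1))).card := by
    rw [Finset.card_univ, ZMod.card, Finset.card_product, Finset.card_range]
    nlinarith [hlt]
  obtain ⟨⟨a₁, b₁⟩, hmem1, ⟨a₂, b₂⟩, hmem2, hne, heq⟩ :=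
    Finset.exists_ne_map_eq_of_card_lt_of_maps_to hcard
      (f := fun ab : ℕ × ℕ => (ab.1 : ZMod p) - x * ab.2)
      (fun a _ => Finset.mem_univ _)
  simp only [Finset.mem_product, Finset.mem_range] at hmem1 hmem2
  set u : ℤ := (a₁ : ℤ) - a₂ with hu
  set v : ℤ := (b₁ : ℤ) - b₂ with hv
  have hub : -(n : ℤ) ≤ u ∧ u ≤ n := by
    constructor <;> simp only [hu] <;> omega
  have hvb : -(n : ℤ) ≤ v ∧ v ≤ n := by
    constructor <;> simp only [hv] <;> omega
  have hcong : ((u : ℤ) : ZMod p) = x * ((v : ℤ) : ZMod p) := by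
    simp only [hu, hv]
    push_cast
    linear_combination heq
  set N : ℤ := u ^ 2 + u * v + v ^ 2 with hNdef
  have hN0 : ((N : ℤ) : ZMod p) = 0 := by
    have : ((N : ℤ) : ZMod p) = ((v : ℤ) : ZMod p) ^ 2 * (x ^ 2 + x + 1) := by
      push_cast [hNdef]
      linear_combination (((u : ℤ) : ZMod p) + x * ((v : ℤ) : ZMod p)
        + ((v : ℤ) : ZMod p)) * hcong
    rw [this, hx2, mul_zero]
  have hpdvd : (p : ℤ) ∣ N := (ZMod.intCast_zmod_eq_zero_iff_dvd N p).mp hN0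
  have hNpos : 0 < N := by
    have huv : u ≠ 0 ∨ v ≠ 0 := by
      by_contra hcon
      push_neg at hcon
      apply hne
      simp only [hu, hv] at hcon
      have : a₁ = a₂ ∧ b₁ = b₂ := by omega
      simp [this.1, this.2]
    rw [hNdef]
    exact aux_pos u v huv
  have hNlt : N < 3 * p := by
    have hau : |u| ≤ (n : ℤ) := abs_le.mpr hub
    have hav : |v| ≤ (n : ℤ) := abs_le.mpr hvb
    have h1 : u ^ 2 ≤ (n : ℤ) ^ 2 := sq_le_sq' hub.1 hub.2
    have h2 : v ^ 2 ≤ (n : ℤ) ^ 2 := sq_le_sq' hvb.1 hvb.2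
    have h3 : u * v ≤ (n : ℤ) ^ 2 := by
      calc u * v ≤ |u * v| := le_abs_self _
        _ = |u| * |v| := abs_mul u v
        _ ≤ (n : ℤ) * n := mul_le_mul hau hav (abs_nonneg v) (by positivity)
        _ = (n : ℤ) ^ 2 := (pow_two _).symm
    have hnp : (n : ℤ) ^ 2 < p := by exact_mod_cast hsq
    rw [hNdef]; linarith
  obtain ⟨k, hk⟩ := hpdvd
  have hppos : (0 : ℤ) < p := by exact_mod_cast hp.pos
  have hk12 : k = 1 ∨ k = 2 := aux_k N p k hk hNpos hNlt hppos
  rcases hk12 with rfl | rfl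
  · exact ⟨u, v, by rw [← hNdef]; linarith [hk]⟩
  · -- N = 2p is impossible by parity
    exfalso
    have hqodd : (p : ℤ) % 2 = 1 := by omega
    exact aux_parity u v p hqodd (by rw [← hNdef]; exact hk)
end
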